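/- Let μ be a finite measure on a measurable space S with total mass |S| > 0, let g : S → ℝ be measurable, and let a ∈ ℝ with |a| < 1. Then there exists a unique c ∈ ℝ such that ∫ (e^{g(x)+c} - 1)/(e^{g(x)+c} + 1) dμ(x) = a·|S|, provided that g is μ-integrable (or, more generally, such that the integrand is integrable for every c). -/

import Mathlib

/-!
Write `φ t = (eᵗ - 1)/(eᵗ + 1)`, a continuous strictly increasing function from `ℝ` onto
`(-1, 1)`. Then `F c = ∫ φ (g x + c) dμ` is continuous by dominated convergence, strictly
increasing because `μ ≠ 0`, and tends to `∓|S|` as `c → ∓∞`, again by dominated convergence.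
The intermediate value theorem gives `c` with `F c = a |S|`, and strict monotonicity its uniqueness.
-/

open MeasureTheory Filter Set Topology Real

/-- `expRatio t = tanh (t / 2)`. -/
noncomputable def expRatio (t : ℝ) : ℝ := (exp t - 1) / (exp t + 1)

lemma expRatio_eq_one_sub (t : ℝ) : expRatio t = 1 - 2 / (exp t + 1) := by
  have : exp t + 1 ≠ 0 := by positivity
  rw [expRatio, eq_sub_iff_add_eq, ← add_div, div_eq_one_iff_eq this]
  ring

lemma continuous_expRatio : Continuous expRatio :=
  (continuous_exp.sub continuous_const).div (continuous_exp.add continuous_const)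
    fun t => by positivity

lemma strictMono_expRatio : StrictMono expRatio := by
  intro s t hst
  rw [expRatio_eq_one_sub, expRatio_eq_one_sub]
  have : 2 / (exp t + 1) < 2 / (exp s + 1) :=
    div_lt_div_of_pos_left two_pos (by positivity) (by gcongr)
  linarith

lemma tendsto_expRatio_atTop : Tendsto expRatio atTop (𝓝 1) := by
  have h : Tendsto (fun t => 2 / (exp t + 1)) atTop (𝓝 0) :=
    tendsto_const_nhds.div_atTop (tendsto_atTop_add_const_right _ 1 tendsto_exp_atTop)
  simpa [funext expRatio_eq_one_sub] using (tendsto_const_nhds (x := (1 : ℝ))).sub h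

lemma tendsto_expRatio_atBot : Tendsto expRatio atBot (𝓝 (-1)) := by
  have h : Tendsto expRatio atBot (𝓝 ((0 - 1) / (0 + 1))) :=
    (tendsto_exp_atBot.sub_const 1).div (tendsto_exp_atBot.add_const 1) (by norm_num)
  simpa using h

lemma existsUnique_eq_of_strictMono_of_tendsto {F : ℝ → ℝ} {l u y : ℝ} (hmono : StrictMono F)
    (hcont : Continuous F) (hbot : Tendsto F atBot (𝓝 l)) (htop : Tendsto F atTop (𝓝 u))
    (hy : y ∈ Ioo l u) : ∃! c, F c = y := by
  obtain ⟨c, hc⟩ : y ∈ range F := mem_range_of_exists_le_of_exists_ge hcont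
    ((hbot.eventually (eventually_lt_nhds hy.1)).exists.imp fun _ => le_of_lt)
    ((htop.eventually (eventually_gt_nhds hy.2)).exists.imp fun _ => le_of_lt)
  exact ⟨c, hc, fun d hd => hmono.injective (hd.trans hc.symm)⟩

namespace MeasureTheory

variable {S : Type*} [MeasurableSpace S] {μ : Measure S}

lemma integral_lt_integral_of_forall_lt [NeZero μ] {f g : S → ℝ} (hf : Integrable f μ)
    (hg : Integrable g μ) (hlt : ∀ x, f x < g x) : ∫ x, f x ∂μ < ∫ x, g x ∂μ := by
  have hsupp : Function.support (fun x => g x - f x) = univ :=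
    eq_univ_of_forall fun x => sub_ne_zero.mpr (hlt x).ne'
  rw [← sub_pos, ← integral_sub hg hf, integral_pos_iff_support_of_nonneg
    (fun x => sub_nonneg.mpr (hlt x).le) (hg.sub hf), hsupp]
  exact pos_iff_ne_zero.mpr (Measure.measure_univ_ne_zero.mpr (NeZero.ne μ))

variable {φ : ℝ → ℝ} {g : S → ℝ}

lemma strictMono_integral_comp_add [NeZero μ] (hφ : StrictMono φ)
    (hint : ∀ c, Integrable (fun x => φ (g x + c)) μ) :
    StrictMono fun c => ∫ x, φ (g x + c) ∂μ := fun _ _ hcd =>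
  integral_lt_integral_of_forall_lt (hint _) (hint _) fun x => hφ (by linarith)

variable [IsFiniteMeasure μ] {C : ℝ}

lemma integrable_comp_add (hφ : Continuous φ) (hC : ∀ t, |φ t| ≤ C) (hg : AEMeasurable g μ)
    (c : ℝ) : Integrable (fun x => φ (g x + c)) μ :=
  .of_bound (hφ.measurable.comp_aemeasurable (hg.add_const c)).aestronglyMeasurable C
    (ae_of_all _ fun _ => hC _)

lemma continuous_integral_comp_add (hφ : Continuous φ) (hC : ∀ t, |φ t| ≤ C)
    (hg : AEMeasurable g μ) : Continuous fun c => ∫ x, φ (g x + c) ∂μ :=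
  continuous_of_dominated (fun c => (integrable_comp_add hφ hC hg c).aestronglyMeasurable)
    (fun _ => ae_of_all _ fun _ => hC _) (integrable_const C)
    (ae_of_all _ fun x => hφ.comp (continuous_const_add (g x)))

lemma tendsto_integral_comp_add {L : Filter ℝ} [L.IsCountablyGenerated] {v : ℝ}
    (hφ : Continuous φ) (hC : ∀ t, |φ t| ≤ C) (hg : AEMeasurable g μ)
    (hL : ∀ t : ℝ, Tendsto (t + ·) L L) (hlim : Tendsto φ L (𝓝 v)) :
    Tendsto (fun c => ∫ x, φ (g x + c) ∂μ) L (𝓝 (μ.real univ * v)) := by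
  have := tendsto_integral_filter_of_dominated_convergence (fun _ => C)
    (.of_forall fun c => (integrable_comp_add hφ hC hg c).aestronglyMeasurable)
    (.of_forall fun c => ae_of_all _ fun x => hC (g x + c)) (integrable_const C)
    (ae_of_all μ fun x => hlim.comp (hL (g x)))
  simpa using this

theorem existsUnique_integral_comp_add_eq [NeZero μ] {l u y : ℝ} (hmono : StrictMono φ)
    (hcont : Continuous φ) (hbot : Tendsto φ atBot (𝓝 l)) (htop : Tendsto φ atTop (𝓝 u))
    (hg : AEMeasurable g μ) (hy : y ∈ Ioo (μ.real univ * l) (μ.real univ * u)) :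
    ∃! c, ∫ x, φ (g x + c) ∂μ = y := by
  have hC (t : ℝ) : |φ t| ≤ max |l| |u| :=
    abs_le_max_abs_abs (hmono.monotone.le_of_tendsto hbot t) (hmono.monotone.ge_of_tendsto htop t)
  exact existsUnique_eq_of_strictMono_of_tendsto
    (strictMono_integral_comp_add hmono (integrable_comp_add hcont hC hg))
    (continuous_integral_comp_add hcont hC hg)
    (tendsto_integral_comp_add hcont hC hg (fun t => tendsto_atBot_add_const_left _ t tendsto_id) hbot)
    (tendsto_integral_comp_add hcont hC hg (fun t => tendsto_atTop_add_const_left _ t tendsto_id) htop)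
    hy

end MeasureTheory

theorem stmt_5_general {S : Type*} [MeasurableSpace S] (μ : Measure S) [IsFiniteMeasure μ]
    (hS : 0 < (μ Set.univ).toReal)
    (g : S → ℝ) (hg : Measurable g)
    (a : ℝ) (ha : |a| < 1) :
    ∃! c : ℝ,
      ∫ x, (Real.exp (g x + c) - 1) / (Real.exp (g x + c) + 1) ∂μ =
        a * (μ Set.univ).toReal := by
  have : NeZero μ := ⟨fun h => by simp [h] at hS⟩
  have hy : a * μ.real univ ∈ Ioo (μ.real univ * -1) (μ.real univ * 1) := by
    obtain ⟨h₁, h₂⟩ := abs_lt.mp ha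
    change 0 < μ.real univ at hS
    constructor <;> nlinarith
  exact existsUnique_integral_comp_add_eq strictMono_expRatio continuous_expRatio
    tendsto_expRatio_atBot tendsto_expRatio_atTop hg.aemeasurable hy

theorem stmt_5 {S : Type*} [MeasurableSpace S] (μ : Measure S) [IsFiniteMeasure μ]
    (hS : 0 < (μ Set.univ).toReal)
    (g : S → ℝ) (hg : Measurable g)
    (hint : ∀ c : ℝ, Integrable
      (fun x => (Real.exp (g x + c) - 1) / (Real.exp (g x + c) + 1)) μ)
    (a : ℝ) (ha : |a| < 1) :
    ∃! c : ℝ,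
      ∫ x, (Real.exp (g x + c) - 1) / (Real.exp (g x + c) + 1) ∂μ =
        a * (μ Set.univ).toReal :=
  stmt_5_general μ hS g hg a ha
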